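/- arXiv:1403.1402 — 3 statements merged into one kernel-verified Lean document; each statement's English description precedes it below -/
import Mathlib

section
/- Let J ∈ ℕ, T > 0, and let M : [0,T] → ℝ^{J×J} be continuously differentiable with each M(t) symmetric positive definite, let S, B : [0,T] → ℝ^{J×J} be continuous with each S(t) symmetric positive semidefinite, and suppose there are constants c₁, c₂ ≥ 0 such that for all t ∈ [0,T] and all x ∈ ℝ^J: |M'(t) x·x| ≤ c₁ (M(t) x·x) and |B(t) x·x| ≤ (1/2)(S(t) x·x) + c₂ (M(t) x·x). Let α : [0,T] → ℝ^J be differentiable and satisfy the linear evolution equation (d/dt)(M(t) α(t)) + (S(t) + B(t)) α(t) = 0 for all t ∈ [0,T]. Then for every t ∈ [0,T]: M(t) α(t)·α(t) + ∫_0^t S(s) α(s)·α(s) ds ≤ e^{(c₁+2c₂)t} (M(0) α(0)·α(0)). -/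
open Matrix Set Topology

/-!
The energy `E = M α ⬝ᵥ α` has derivative `2 (M α)' ⬝ᵥ α - M' α ⬝ᵥ α`: comparing the given
derivative of `M α` with the product rule `M' α + M α'` and using the symmetry of `M` eliminates
`α'`. Inserting the equation `(M α)' = -(S + B) α` and the bounds on `M'` and `B` gives
`E' + S α ⬝ᵥ α ≤ (c₁ + 2 c₂) E`, so Grönwall's inequality applies to `E + ∫₀ᵗ S α ⬝ᵥ α`, whose
integral term is nonnegative.
-/

section Calculus

variable {m n : Type*} [Fintype n] {s : Set ℝ} {t : ℝ}

theorem HasDerivWithinAt.dotProduct {u v : ℝ → n → ℝ} {u' v' : n → ℝ}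
    (hu : HasDerivWithinAt u u' s t) (hv : HasDerivWithinAt v v' s t) :
    HasDerivWithinAt (fun r => u r ⬝ᵥ v r) (u' ⬝ᵥ v t + u t ⬝ᵥ v') s t := by
  have h : HasDerivWithinAt (fun r => ∑ i, u r i * v r i)
      (∑ i, (u' i * v t i + u t i * v' i)) s t :=
    .fun_sum fun i _ => (hasDerivWithinAt_pi.1 hu i).fun_mul (hasDerivWithinAt_pi.1 hv i)
  simpa only [_root_.dotProduct, Finset.sum_add_distrib] using h

theorem HasDerivWithinAt.mulVec {A : ℝ → Matrix m n ℝ} {A' : Matrix m n ℝ}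
    {v : ℝ → n → ℝ} {v' : n → ℝ}
    (hA : ∀ i j, HasDerivWithinAt (fun r => A r i j) (A' i j) s t)
    (hv : HasDerivWithinAt v v' s t) :
    HasDerivWithinAt (fun r => A r *ᵥ v r) (A' *ᵥ v t + A t *ᵥ v') s t :=
  hasDerivWithinAt_pi.2 fun i => (hasDerivWithinAt_pi.2 (hA i)).dotProduct hv

theorem Matrix.IsSymm.mulVec_dotProduct_comm {R : Type*} [CommSemiring R] {A : Matrix n n R}
    (hA : A.IsSymm) (x y : n → R) : A *ᵥ x ⬝ᵥ y = A *ᵥ y ⬝ᵥ x := by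
  rw [dotProduct_comm, dotProduct_mulVec, ← mulVec_transpose, hA.eq]

theorem HasDerivWithinAt.mulVec_dotProduct_self {M : ℝ → Matrix n n ℝ} {M' : Matrix n n ℝ}
    {α : ℝ → n → ℝ} {α' w : n → ℝ}
    (hM : ∀ i j, HasDerivWithinAt (fun r => M r i j) (M' i j) s t)
    (hα : HasDerivWithinAt α α' s t) (hMα : HasDerivWithinAt (fun r => M r *ᵥ α r) w s t)
    (hs : UniqueDiffWithinAt ℝ s t) (hsymm : (M t).IsSymm) :
    HasDerivWithinAt (fun r => M r *ᵥ α r ⬝ᵥ α r) (2 * (w ⬝ᵥ α t) - M' *ᵥ α t ⬝ᵥ α t) s t := by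
  have hw : w = M' *ᵥ α t + M t *ᵥ α' := hs.eq_deriv s hMα (.mulVec hM hα)
  convert hMα.dotProduct hα using 1
  rw [hsymm.mulVec_dotProduct_comm, hw, add_dotProduct]
  ring

theorem ContinuousOn.mulVec_dotProduct {A : ℝ → Matrix m n ℝ} {u : ℝ → n → ℝ} {v : ℝ → m → ℝ}
    [Fintype m] (hA : ∀ i j, ContinuousOn (fun r => A r i j) s) (hu : ContinuousOn u s)
    (hv : ContinuousOn v s) : ContinuousOn (fun r => A r *ᵥ u r ⬝ᵥ v r) s := by
  simp only [mulVec, dotProduct]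
  fun_prop

theorem ContinuousOn.integral_hasDerivWithinAt_Icc {E : Type*} [NormedAddCommGroup E]
    [NormedSpace ℝ E] [CompleteSpace E] {f : ℝ → E} {a b : ℝ} (hf : ContinuousOn f (Icc a b))
    (ht : t ∈ Icc a b) :
    HasDerivWithinAt (fun u => ∫ r in a..u, f r) (f t) (Icc a b) t := by
  have : Fact (t ∈ Icc a b) := ⟨ht⟩
  refine intervalIntegral.integral_hasDerivWithinAt_right ?_
    (hf.stronglyMeasurableAtFilter_nhdsWithin measurableSet_Icc t) (hf t ht)
  refine (hf.mono ?_).intervalIntegrable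
  rw [uIcc_of_le ht.1]
  exact Icc_subset_Icc_right ht.2

end Calculus

section Gronwall

variable {f f' φ : ℝ → ℝ} {a b K : ℝ}

theorem le_mul_exp_of_hasDerivWithinAt_le_mul
    (hf : ∀ x ∈ Icc a b, HasDerivWithinAt f (f' x) (Icc a b) x)
    (bound : ∀ x ∈ Ico a b, f' x ≤ K * f x) :
    ∀ x ∈ Icc a b, f x ≤ f a * Real.exp (K * (x - a)) := by
  intro x hx
  have hslope (y : ℝ) (hy : y ∈ Ico a b) (r : ℝ) (hr : f' y < r) :
      ∃ᶠ z in 𝓝[>] y, (z - y)⁻¹ * (f z - f y) < r := by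
    have hy' := (hf y (Ico_subset_Icc_self hy)).mono_of_mem_nhdsWithin (Icc_mem_nhdsGE_of_mem hy)
    simpa only [slope_def_field, div_eq_inv_mul] using hy'.liminf_right_slope_le hr
  have := le_gronwallBound_of_liminf_deriv_right_le (ε := 0)
    (fun y hy => (hf y hy).continuousWithinAt) hslope le_rfl (by simpa using bound) x hx
  rwa [gronwallBound_ε0] at this

theorem add_integral_le_exp_mul_of_hasDerivWithinAt (hK : 0 ≤ K)
    (hf : ∀ x ∈ Icc a b, HasDerivWithinAt f (f' x) (Icc a b) x)
    (hφ : ContinuousOn φ (Icc a b)) (hφ_nonneg : ∀ x ∈ Icc a b, 0 ≤ φ x)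
    (bound : ∀ x ∈ Ico a b, f' x + φ x ≤ K * f x) :
    ∀ x ∈ Icc a b, f x + ∫ r in a..x, φ r ≤ Real.exp (K * (x - a)) * f a := by
  intro x hx
  have hderiv (y : ℝ) (hy : y ∈ Icc a b) :
      HasDerivWithinAt (fun u => f u + ∫ r in a..u, φ r) (f' y + φ y) (Icc a b) y :=
    (hf y hy).add (hφ.integral_hasDerivWithinAt_Icc hy)
  have hbound (y : ℝ) (hy : y ∈ Ico a b) :
      f' y + φ y ≤ K * (f y + ∫ r in a..y, φ r) := by
    have : 0 ≤ ∫ r in a..y, φ r := intervalIntegral.integral_nonneg hy.1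
      fun r hr => hφ_nonneg r ⟨hr.1, hr.2.trans hy.2.le⟩
    nlinarith [bound y hy]
  simpa [mul_comm] using le_mul_exp_of_hasDerivWithinAt_le_mul hderiv hbound x hx

end Gronwall

theorem two_mul_neg_add_mulVec_dotProduct_add_le {n : Type*} [Fintype n]
    {M M' S B : Matrix n n ℝ} {c₁ c₂ : ℝ} (x : n → ℝ)
    (hM' : |M' *ᵥ x ⬝ᵥ x| ≤ c₁ * (M *ᵥ x ⬝ᵥ x))
    (hB : |B *ᵥ x ⬝ᵥ x| ≤ 1 / 2 * (S *ᵥ x ⬝ᵥ x) + c₂ * (M *ᵥ x ⬝ᵥ x)) :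
    2 * (-((S + B) *ᵥ x) ⬝ᵥ x) - M' *ᵥ x ⬝ᵥ x + S *ᵥ x ⬝ᵥ x ≤ (c₁ + 2 * c₂) * (M *ᵥ x ⬝ᵥ x) := by
  rw [add_mulVec, neg_dotProduct, add_dotProduct]
  linarith [neg_abs_le (M' *ᵥ x ⬝ᵥ x), neg_abs_le (B *ᵥ x ⬝ᵥ x)]

theorem semidiscrete_L2_stability_general
    (J : ℕ) (T : ℝ) (hT : 0 < T)
    (M M' S B : ℝ → Matrix (Fin J) (Fin J) ℝ)
    (hMderiv : ∀ t ∈ Set.Icc (0 : ℝ) T, ∀ i j : Fin J,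
      HasDerivWithinAt (fun s => M s i j) (M' t i j) (Set.Icc (0 : ℝ) T) t)
    (hMpd : ∀ t ∈ Set.Icc (0 : ℝ) T, (M t).PosDef)
    (hScont : ∀ i j : Fin J, ContinuousOn (fun s => S s i j) (Set.Icc (0 : ℝ) T))
    (hSpsd : ∀ t ∈ Set.Icc (0 : ℝ) T, (S t).PosSemidef)
    (c₁ c₂ : ℝ) (hc₁ : 0 ≤ c₁) (hc₂ : 0 ≤ c₂)
    (hM'bound : ∀ t ∈ Set.Icc (0 : ℝ) T, ∀ x : Fin J → ℝ,
      |(M' t).mulVec x ⬝ᵥ x| ≤ c₁ * ((M t).mulVec x ⬝ᵥ x))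
    (hBbound : ∀ t ∈ Set.Icc (0 : ℝ) T, ∀ x : Fin J → ℝ,
      |(B t).mulVec x ⬝ᵥ x| ≤ (1 / 2) * ((S t).mulVec x ⬝ᵥ x)
        + c₂ * ((M t).mulVec x ⬝ᵥ x))
    (α : ℝ → Fin J → ℝ)
    (hα : DifferentiableOn ℝ α (Set.Icc (0 : ℝ) T))
    (hODE : ∀ t ∈ Set.Icc (0 : ℝ) T,
      HasDerivWithinAt (fun s => (M s).mulVec (α s))
        (-(S t + B t).mulVec (α t)) (Set.Icc (0 : ℝ) T) t) :
    ∀ t ∈ Set.Icc (0 : ℝ) T,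
      (M t).mulVec (α t) ⬝ᵥ α t + (∫ s in (0 : ℝ)..t, (S s).mulVec (α s) ⬝ᵥ α s)
        ≤ Real.exp ((c₁ + 2 * c₂) * t) * ((M 0).mulVec (α 0) ⬝ᵥ α 0) := by
  have henergy (t : ℝ) (ht : t ∈ Icc 0 T) :
      HasDerivWithinAt (fun r => M r *ᵥ α r ⬝ᵥ α r)
        (2 * (-((S t + B t) *ᵥ α t) ⬝ᵥ α t) - M' t *ᵥ α t ⬝ᵥ α t) (Icc 0 T) t :=
    HasDerivWithinAt.mulVec_dotProduct_self (hMderiv t ht) (hα t ht).hasDerivWithinAt (hODE t ht)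
      (uniqueDiffOn_Icc hT t ht) (isHermitian_iff_isSymm.1 (hMpd t ht).isHermitian)
  have hdissipation_nonneg (t : ℝ) (ht : t ∈ Icc 0 T) : 0 ≤ S t *ᵥ α t ⬝ᵥ α t := by
    simpa [dotProduct_comm] using (hSpsd t ht).dotProduct_mulVec_nonneg (α t)
  simpa using add_integral_le_exp_mul_of_hasDerivWithinAt (by positivity) henergy
    (ContinuousOn.mulVec_dotProduct hScont hα.continuousOn hα.continuousOn)
    hdissipation_nonneg
    (fun t ht => two_mul_neg_add_mulVec_dotProduct_add_le (α t)
      (hM'bound t (Ico_subset_Icc_self ht) _) (hBbound t (Ico_subset_Icc_self ht) _))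

/-- L² stability bound for the semidiscrete ALE-ESFEM scheme in matrix–vector form:
if `M` is C¹ with derivative `M'` satisfying `|M' x·x| ≤ c₁ M x·x`, each `M(t)` is
symmetric positive definite, `S, B` are continuous with `S(t)` symmetric positive
semidefinite and `|B x·x| ≤ (1/2) S x·x + c₂ M x·x`, and `α` solves
`(d/dt)(M α) + (S + B) α = 0` on `[0, T]`, then
`M(t)α(t)·α(t) + ∫₀ᵗ S α·α ≤ e^{(c₁+2c₂)t} M(0)α(0)·α(0)`. -/
theorem semidiscrete_L2_stability
    (J : ℕ) (T : ℝ) (hT : 0 < T)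
    (M M' S B : ℝ → Matrix (Fin J) (Fin J) ℝ)
    (hMderiv : ∀ t ∈ Set.Icc (0 : ℝ) T, ∀ i j : Fin J,
      HasDerivWithinAt (fun s => M s i j) (M' t i j) (Set.Icc (0 : ℝ) T) t)
    (hM'cont : ∀ i j : Fin J, ContinuousOn (fun s => M' s i j) (Set.Icc (0 : ℝ) T))
    (hMpd : ∀ t ∈ Set.Icc (0 : ℝ) T, (M t).PosDef)
    (hScont : ∀ i j : Fin J, ContinuousOn (fun s => S s i j) (Set.Icc (0 : ℝ) T))
    (hBcont : ∀ i j : Fin J, ContinuousOn (fun s => B s i j) (Set.Icc (0 : ℝ) T))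
    (hSpsd : ∀ t ∈ Set.Icc (0 : ℝ) T, (S t).PosSemidef)
    (c₁ c₂ : ℝ) (hc₁ : 0 ≤ c₁) (hc₂ : 0 ≤ c₂)
    (hM'bound : ∀ t ∈ Set.Icc (0 : ℝ) T, ∀ x : Fin J → ℝ,
      |(M' t).mulVec x ⬝ᵥ x| ≤ c₁ * ((M t).mulVec x ⬝ᵥ x))
    (hBbound : ∀ t ∈ Set.Icc (0 : ℝ) T, ∀ x : Fin J → ℝ,
      |(B t).mulVec x ⬝ᵥ x| ≤ (1 / 2) * ((S t).mulVec x ⬝ᵥ x)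
        + c₂ * ((M t).mulVec x ⬝ᵥ x))
    (α : ℝ → Fin J → ℝ)
    (hα : DifferentiableOn ℝ α (Set.Icc (0 : ℝ) T))
    (hODE : ∀ t ∈ Set.Icc (0 : ℝ) T,
      HasDerivWithinAt (fun s => (M s).mulVec (α s))
        (-(S t + B t).mulVec (α t)) (Set.Icc (0 : ℝ) T) t) :
    ∀ t ∈ Set.Icc (0 : ℝ) T,
      (M t).mulVec (α t) ⬝ᵥ α t + (∫ s in (0 : ℝ)..t, (S s).mulVec (α s) ⬝ᵥ α s)
        ≤ Real.exp ((c₁ + 2 * c₂) * t) * ((M 0).mulVec (α 0) ⬝ᵥ α 0) :=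
  semidiscrete_L2_stability_general J T hT M M' S B hMderiv hMpd hScont hSpsd c₁ c₂ hc₁ hc₂ hM'bound
    hBbound α hα hODE
end

section
/- Let J, N ∈ ℕ with N ≥ 2, τ > 0, and for n = 0, …, N let M^n be real symmetric positive definite J×J matrices, S^n real symmetric positive semidefinite J×J matrices, and b^n : ℝ^J × ℝ^J → ℝ bilinear forms. Assume: (i) there is μ ≥ 0 such that for all n < N and all x, y ∈ ℝ^J, |(M^{n+1} − M^n) x·y| ≤ μ τ (M^n x·x)^{1/2} (M^n y·y)^{1/2}; (ii) there is c_b ≥ 0 such that for all n and all x, |b^n(x,x)| ≤ (1/2)(S^n x·x) + c_b (M^n x·x). Let U^0, …, U^N ∈ ℝ^J satisfy the BDF2 scheme: for n = 1, …, N−1 and all φ ∈ ℝ^J, (3/2)(M^{n+1} U^{n+1})·φ − 2(M^n U^n)·φ + (1/2)(M^{n−1} U^{n−1})·φ + τ ( (S^{n+1} U^{n+1})·φ + b^{n+1}(U^{n+1}, φ) ) = 0, and assume the starting bound M^1 U^1·U^1 ≤ c₀ (M^0 U^0·U^0) for some c₀ ≥ 0. Then there exist τ₀ > 0 and C ≥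 0, depending only on μ, c_b, c₀ and the product Nτ, such that whenever τ ≤ τ₀, for every n with 2 ≤ n ≤ N: M^n U^n·U^n + τ Σ_{i=2}^{n} S^i U^i·U^i ≤ C (M^0 U^0·U^0). -/
/-
Testing the scheme with `Uⁿ⁺¹` and applying Dahlquist's G-stability identity for BDF2 to the
symmetric form of `Mⁿ⁺¹` makes the BDF2 difference quotient telescope in the G-norm energy
`Eⁿ = (|Uⁿ|² + |2Uⁿ - Uⁿ⁻¹|²) / 4`, up to a nonnegative remainder. Replacing `Mⁿ` and `Mⁿ⁻¹` by
`Mⁿ⁺¹` costs `O(τ)` times the energies by (i), and by (ii) the stiffness term absorbs half of the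
advection term, leaving `Eⁿ⁺¹ + (τ/2) |∇Uⁿ⁺¹|² ≤ (1 + Cτ) Eⁿ` once `τ` is small. A discrete
Gronwall argument with `(1 + Cτ)ⁿ ≤ exp (C T)` concludes.
-/

open Matrix
open LinearMap (BilinForm)

theorem le_of_one_sub_mul_add_le {δ E E' s : ℝ} (hδ : 0 ≤ δ) (hδ' : δ ≤ 1 / 2) (hE : 0 ≤ E)
    (hs : 0 ≤ s) (h : (1 - δ) * E' + s ≤ (1 + δ) * E) : E' + s ≤ (1 + 4 * δ) * E := by
  have hE' : E' ≤ 3 * E := by nlinarith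
  nlinarith

theorem add_sum_Icc_le_pow_mul {e σ : ℕ → ℝ} {r : ℝ} {n : ℕ} (hr : 1 ≤ r) (hn : 1 ≤ n)
    (hσ : ∀ k ≤ n, 0 ≤ σ k) (hstep : ∀ k, 1 ≤ k → k < n → e (k + 1) + σ (k + 1) ≤ r * e k) :
    e n + ∑ i ∈ Finset.Icc 2 n, σ i ≤ r ^ (n - 1) * e 1 := by
  induction n, hn using Nat.le_induction with
  | base => simp
  | succ n hn ih =>
    have ih := ih (fun k hk => hσ k (by omega)) fun k hk hkn => hstep k hk (by omega)
    have hsum : 0 ≤ ∑ i ∈ Finset.Icc 2 n, σ i :=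
      Finset.sum_nonneg fun i hi => hσ i (by grind)
    rw [Finset.sum_Icc_succ_top (by omega), show n + 1 - 1 = n - 1 + 1 by omega, pow_succ]
    calc e (n + 1) + (∑ i ∈ Finset.Icc 2 n, σ i + σ (n + 1))
        ≤ r * e n + r * ∑ i ∈ Finset.Icc 2 n, σ i := by
          nlinarith [hstep n hn (by omega)]
      _ ≤ r ^ (n - 1) * r * e 1 := by nlinarith

theorem Real.one_add_pow_le_exp_mul {x : ℝ} (hx : -1 ≤ x) (k : ℕ) :
    (1 + x) ^ k ≤ Real.exp (k * x) := by
  rw [Real.exp_nat_mul]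
  exact pow_le_pow_left₀ (by linarith) (by linarith [Real.add_one_le_exp x]) k

namespace BDF2

variable {V : Type*} [AddCommGroup V] [Module ℝ V]

/-- Dahlquist's G-norm of the BDF2 pair `(Uⁿ, Uⁿ⁻¹) = (u, v)`. -/
noncomputable def energy (B : BilinForm ℝ V) (u v : V) : ℝ :=
  (B u u + B ((2 : ℝ) • u - v) ((2 : ℝ) • u - v)) / 4

section Nonneg

variable {B : BilinForm ℝ V}

theorem apply_sub_sub_le (hB : ∀ x, 0 ≤ B x x) (x y : V) :
    B (x - y) (x - y) ≤ 2 * B x x + 2 * B y y := by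
  have := hB (x + y)
  simp only [map_add, map_sub, LinearMap.add_apply, LinearMap.sub_apply] at this ⊢
  linarith

theorem energy_nonneg (hB : ∀ x, 0 ≤ B x x) (u v : V) : 0 ≤ energy B u v := by
  have := hB u
  have := hB ((2 : ℝ) • u - v)
  unfold energy
  linarith

theorem apply_self_le_energy (hB : ∀ x, 0 ≤ B x x) (u v : V) : B u u ≤ 4 * energy B u v := by
  have := hB ((2 : ℝ) • u - v)
  unfold energy
  linarith

theorem apply_prev_le_energy (hB : ∀ x, 0 ≤ B x x) (u v : V) :
    B v v ≤ 32 * energy B u v := by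
  have h := apply_sub_sub_le hB ((2 : ℝ) • u) ((2 : ℝ) • u - v)
  simp only [sub_sub_cancel, map_smul, LinearMap.smul_apply, smul_eq_mul] at h
  have := hB u
  have := hB ((2 : ℝ) • u - v)
  unfold energy
  linarith

theorem energy_le_apply_add_apply (hB : ∀ x, 0 ≤ B x x) (u v : V) :
    energy B u v ≤ (9 * B u u + 2 * B v v) / 4 := by
  have h := apply_sub_sub_le hB ((2 : ℝ) • u) v
  simp only [map_smul, LinearMap.smul_apply, smul_eq_mul] at h
  unfold energy
  linarith

end Nonneg

theorem energy_identity {B : BilinForm ℝ V} (hB : B.IsSymm) (a c d : V) :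
    3 / 2 * B a a - 2 * B a c + 1 / 2 * B a d
      = energy B a c - energy B c d + B (a - (2 : ℝ) • c + d) (a - (2 : ℝ) • c + d) / 4 := by
  unfold energy
  simp only [map_add, map_sub, map_smul, LinearMap.add_apply, LinearMap.sub_apply,
    LinearMap.smul_apply, smul_eq_mul]
  linear_combination -hB.eq a c + (1 / 4 : ℝ) * hB.eq a d

/-- Hypothesis (i) with `ε = μτ`, after AM–GM. -/
def IsNear (ε : ℝ) (B B' : BilinForm ℝ V) : Prop :=
  ∀ x y, |B' x y - B x y| ≤ ε * ((B x x + B y y) / 2)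

namespace IsNear

variable {ε : ℝ} {B B' : BilinForm ℝ V}

theorem of_sqrt (hε : 0 ≤ ε) (hB : ∀ x, 0 ≤ B x x)
    (h : ∀ x y, |B' x y - B x y| ≤ ε * √(B x x) * √(B y y)) : IsNear ε B B' := fun x y => by
  have hgm : √(B x x) * √(B y y) ≤ (B x x + B y y) / 2 := by
    nlinarith [two_mul_le_add_sq √(B x x) √(B y y), Real.sq_sqrt (hB x), Real.sq_sqrt (hB y)]
  calc |B' x y - B x y| ≤ ε * (√(B x x) * √(B y y)) := (h x y).trans_eq (mul_assoc ..)
    _ ≤ ε * ((B x x + B y y) / 2) := mul_le_mul_of_nonneg_left hgm hε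

theorem abs_sub_apply_self_le (h : IsNear ε B B') (x : V) : |B' x x - B x x| ≤ ε * B x x := by
  simpa using h x x

theorem apply_self_le (h : IsNear ε B B') (x : V) : B' x x ≤ (1 + ε) * B x x := by
  linarith [(abs_le.mp (h.abs_sub_apply_self_le x)).2]

theorem apply_self_le_two_mul (h : IsNear ε B B') (hε : ε ≤ 1 / 2) (hB : ∀ x, 0 ≤ B x x)
    (x : V) : B x x ≤ 2 * B' x x := by
  nlinarith [(abs_le.mp (h.abs_sub_apply_self_le x)).1, hB x]

theorem energy_le (h : IsNear ε B B') (u v : V) : energy B' u v ≤ (1 + ε) * energy B u v := by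
  have := h.apply_self_le u
  have := h.apply_self_le ((2 : ℝ) • u - v)
  unfold energy
  linarith

end IsNear

theorem energy_le_of_isNear {ε c₀ : ℝ} {B B' : BilinForm ℝ V} {u v : V} (h : IsNear ε B B')
    (hε : ε ≤ 1 / 2) (hB : 0 ≤ B v v) (hB' : ∀ x, 0 ≤ B' x x) (hu : B' u u ≤ c₀ * B v v) :
    energy B' u v ≤ (9 * c₀ + 3) / 4 * B v v := by
  nlinarith [energy_le_apply_add_apply hB' u v, h.apply_self_le v]

theorem energy_step {B₀ B₁ B₂ : BilinForm ℝ V} {ε κ s β : ℝ} {a c d : V}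
    (hε : 0 ≤ ε) (hε' : ε ≤ 1 / 2) (hκ : 0 ≤ κ)
    (h₀ : ∀ x, 0 ≤ B₀ x x) (h₁ : ∀ x, 0 ≤ B₁ x x) (h₂ : ∀ x, 0 ≤ B₂ x x) (hB₂ : B₂.IsSymm)
    (h₀₁ : IsNear ε B₀ B₁) (h₁₂ : IsNear ε B₁ B₂) (hβ : |β| ≤ s / 2 + κ * B₂ a a)
    (hscheme : 3 / 2 * B₂ a a - 2 * B₁ a c + 1 / 2 * B₀ a d + s + β = 0) :
    (1 - (29 * ε + 4 * κ)) * energy B₂ a c + s / 2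
      ≤ (1 + (29 * ε + 4 * κ)) * energy B₁ c d := by
  set E' := energy B₂ a c
  set E := energy B₁ c d
  have hE := energy_nonneg h₁ c d
  have hE' := energy_nonneg h₂ a c
  have ha₂ : B₂ a a ≤ 4 * E' := apply_self_le_energy h₂ a c
  have hc₁ : B₁ c c ≤ 4 * E := apply_self_le_energy h₁ c d
  have hd₁ : B₁ d d ≤ 32 * E := apply_prev_le_energy h₁ c d
  have ha₁ : B₁ a a ≤ 2 * B₂ a a := h₁₂.apply_self_le_two_mul hε' h₁ a
  have ha₀ : B₀ a a ≤ 2 * B₁ a a := h₀₁.apply_self_le_two_mul hε' h₀ a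
  have hd₀ : B₀ d d ≤ 2 * B₁ d d := h₀₁.apply_self_le_two_mul hε' h₀ d
  have hac : |B₂ a c - B₁ a c| ≤ ε * (4 * E' + 2 * E) :=
    (h₁₂ a c).trans (mul_le_mul_of_nonneg_left (by linarith) hε)
  have had₂ : |B₂ a d - B₁ a d| ≤ ε * (4 * E' + 16 * E) :=
    (h₁₂ a d).trans (mul_le_mul_of_nonneg_left (by linarith) hε)
  have had₁ : |B₁ a d - B₀ a d| ≤ ε * (8 * E' + 32 * E) :=
    (h₀₁ a d).trans (mul_le_mul_of_nonneg_left (by linarith) hε)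
  have hcd : energy B₂ c d ≤ (1 + ε) * E := h₁₂.energy_le c d
  have hκa : κ * B₂ a a ≤ κ * (4 * E') := mul_le_mul_of_nonneg_left ha₂ hκ
  -- The identity for `B₂` turns the scheme into a telescoping step, up to the nonnegative
  -- remainder `hR` and the level changes `2 (B₂ - B₁) a c` and `(B₂ - B₀) a d / 2`.
  have hR := h₂ (a - (2 : ℝ) • c + d)
  have hid := energy_identity hB₂ a c d
  rw [abs_le] at hac had₂ had₁ hβ
  linarith [hac.1, had₂.2, had₁.2, hβ.1, mul_nonneg hε hE', mul_nonneg hκ hE]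

theorem energy_add_sum_le {B : ℕ → BilinForm ℝ V} {U : ℕ → V} {s β : ℕ → ℝ} {ε κ : ℝ} {N : ℕ}
    (hε : 0 ≤ ε) (hκ : 0 ≤ κ) (hsmall : 29 * ε + 4 * κ ≤ 1 / 2)
    (hB : ∀ k ≤ N, ∀ x, 0 ≤ B k x x) (hsymm : ∀ k ≤ N, (B k).IsSymm)
    (hnear : ∀ k < N, IsNear ε (B k) (B (k + 1))) (hs : ∀ k ≤ N, 0 ≤ s k)
    (hβ : ∀ k ≤ N, |β k| ≤ s k / 2 + κ * B k (U k) (U k))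
    (hscheme : ∀ k, 1 ≤ k → k < N →
      3 / 2 * B (k + 1) (U (k + 1)) (U (k + 1)) - 2 * B k (U (k + 1)) (U k)
        + 1 / 2 * B (k - 1) (U (k + 1)) (U (k - 1)) + s (k + 1) + β (k + 1) = 0)
    {n : ℕ} (hn : 1 ≤ n) (hnN : n ≤ N) :
    B n (U n) (U n) + ∑ i ∈ Finset.Icc 2 n, s i
      ≤ 4 * ((1 + 4 * (29 * ε + 4 * κ)) ^ (n - 1) * energy (B 1) (U 1) (U 0)) := by
  have hgronwall : energy (B n) (U n) (U (n - 1)) + ∑ i ∈ Finset.Icc 2 n, s i / 2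
      ≤ (1 + 4 * (29 * ε + 4 * κ)) ^ (n - 1) * energy (B 1) (U 1) (U 0) := by
    refine add_sum_Icc_le_pow_mul (e := fun k => energy (B k) (U k) (U (k - 1))) (by linarith) hn
      (fun k hk => div_nonneg (hs k (hk.trans hnN)) zero_le_two) fun k hk hkn => ?_
    have hnear₀ := hnear (k - 1) (by omega)
    rw [Nat.sub_add_cancel hk] at hnear₀
    refine le_of_one_sub_mul_add_le (by positivity) hsmall (energy_nonneg (hB k (by omega)) _ _)
      (div_nonneg (hs (k + 1) (by omega)) zero_le_two) ?_
    simpa using energy_step hε (by linarith) hκ (hB (k - 1) (by omega)) (hB k (by omega))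
      (hB (k + 1) (by omega)) (hsymm (k + 1) (by omega)) hnear₀ (hnear k (by omega))
      (hβ (k + 1) (by omega)) (hscheme k hk (by omega))
  have hsum : 0 ≤ ∑ i ∈ Finset.Icc 2 n, s i :=
    Finset.sum_nonneg fun i hi => hs i (by grind)
  rw [← Finset.sum_div] at hgronwall
  linarith [apply_self_le_energy (hB n hnN) (U n) (U (n - 1))]

end BDF2

namespace Matrix

variable {ι : Type*} [Fintype ι] [DecidableEq ι] {M : Matrix ι ι ℝ}

theorem toBilin'_apply_eq_mulVec_dotProduct (M : Matrix ι ι ℝ) (x y : ι → ℝ) :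
    M.toBilin' x y = M *ᵥ y ⬝ᵥ x := by
  rw [toBilin'_apply', dotProduct_comm]

theorem PosSemidef.toBilin'_apply_self_nonneg (hM : M.PosSemidef) (x : ι → ℝ) :
    0 ≤ M.toBilin' x x := by
  simpa [toBilin'_apply'] using hM.dotProduct_mulVec_nonneg x

theorem IsHermitian.isSymm_toBilin' (hM : M.IsHermitian) : M.toBilin'.IsSymm :=
  isSymm_toBilin'_iff_isSymm.mpr (isHermitian_iff_isSymm.mp hM)

end Matrix

namespace BDF2

variable {ι : Type*} [Fintype ι] [DecidableEq ι]

theorem IsNear.of_matrix {ε : ℝ} {M M' : Matrix ι ι ℝ} (hε : 0 ≤ ε) (hM : M.PosSemidef)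
    (h : ∀ x y, |(M' - M) *ᵥ x ⬝ᵥ y| ≤ ε * √(M *ᵥ x ⬝ᵥ x) * √(M *ᵥ y ⬝ᵥ y)) :
    IsNear ε M.toBilin' M'.toBilin' :=
  .of_sqrt hε hM.toBilin'_apply_self_nonneg fun x y => by
    simp only [toBilin'_apply_eq_mulVec_dotProduct]
    rw [mul_right_comm, ← sub_dotProduct, ← sub_mulVec]
    exact h y x

theorem mass_add_sum_stiffness_le {μ c_b τ : ℝ} {N n : ℕ} {M S : ℕ → Matrix ι ι ℝ}
    {b : ℕ → (ι → ℝ) →ₗ[ℝ] (ι → ℝ) →ₗ[ℝ] ℝ} {U : ℕ → ι → ℝ}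
    (hμ : 0 ≤ μ) (hcb : 0 ≤ c_b) (hτ : 0 < τ) (hsmall : 29 * (μ * τ) + 4 * (c_b * τ) ≤ 1 / 2)
    (hM : ∀ k ≤ N, (M k).PosSemidef) (hS : ∀ k ≤ N, (S k).PosSemidef)
    (hnear : ∀ k < N, IsNear (μ * τ) (M k).toBilin' (M (k + 1)).toBilin')
    (hb : ∀ k ≤ N, ∀ x, |b k x x| ≤ 1 / 2 * (S k *ᵥ x ⬝ᵥ x) + c_b * (M k *ᵥ x ⬝ᵥ x))
    (hU : ∀ k, 1 ≤ k → k < N → ∀ φ,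
      3 / 2 * (M (k + 1) *ᵥ U (k + 1) ⬝ᵥ φ) - 2 * (M k *ᵥ U k ⬝ᵥ φ)
        + 1 / 2 * (M (k - 1) *ᵥ U (k - 1) ⬝ᵥ φ)
        + τ * (S (k + 1) *ᵥ U (k + 1) ⬝ᵥ φ + b (k + 1) (U (k + 1)) φ) = 0)
    (hn : 1 ≤ n) (hnN : n ≤ N) :
    M n *ᵥ U n ⬝ᵥ U n + τ * ∑ i ∈ Finset.Icc 2 n, S i *ᵥ U i ⬝ᵥ U i
      ≤ 4 * ((1 + 4 * (29 * (μ * τ) + 4 * (c_b * τ))) ^ (n - 1)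
        * energy (M 1).toBilin' (U 1) (U 0)) := by
  have hestimate := energy_add_sum_le (B := fun k => (M k).toBilin') (U := U)
    (s := fun k => τ * (S k *ᵥ U k ⬝ᵥ U k)) (β := fun k => τ * b k (U k) (U k))
    (mul_nonneg hμ hτ.le) (mul_nonneg hcb hτ.le) hsmall
    (fun k hk => (hM k hk).toBilin'_apply_self_nonneg)
    (fun k hk => (hM k hk).isHermitian.isSymm_toBilin') hnear
    (fun k hk => by
      simpa only [toBilin'_apply_eq_mulVec_dotProduct] using
        mul_nonneg hτ.le ((hS k hk).toBilin'_apply_self_nonneg (U k)))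
    (fun k hk => by
      rw [abs_mul, abs_of_pos hτ]
      have := mul_le_mul_of_nonneg_left (hb k hk (U k)) hτ.le
      simp only [toBilin'_apply_eq_mulVec_dotProduct]
      linarith)
    (fun k hk hkN => by
      have := hU k hk hkN (U (k + 1))
      simp only [toBilin'_apply_eq_mulVec_dotProduct]
      linarith) hn hnN
  simpa only [toBilin'_apply_eq_mulVec_dotProduct, ← Finset.mul_sum] using hestimate

end BDF2

open BDF2 in
theorem bdf2_fully_discrete_L2_stability_general
    (μ c_b c₀ T : ℝ) (hμ : 0 ≤ μ) (hcb : 0 ≤ c_b) (hc₀ : 0 ≤ c₀) :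
    ∃ τ₀ : ℝ, 0 < τ₀ ∧ ∃ C : ℝ, 0 ≤ C ∧
      ∀ (J N : ℕ), 2 ≤ N → ∀ τ : ℝ, 0 < τ → τ ≤ τ₀ → (N : ℝ) * τ = T →
      ∀ (M S : ℕ → Matrix (Fin J) (Fin J) ℝ)
        (b : ℕ → (Fin J → ℝ) →ₗ[ℝ] (Fin J → ℝ) →ₗ[ℝ] ℝ),
        (∀ n ≤ N, (M n).PosDef) →
        (∀ n ≤ N, (S n).PosSemidef) →
        (∀ n < N, ∀ x y : Fin J → ℝ,
          |(M (n + 1) - M n).mulVec x ⬝ᵥ y|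
            ≤ μ * τ * Real.sqrt ((M n).mulVec x ⬝ᵥ x)
                * Real.sqrt ((M n).mulVec y ⬝ᵥ y)) →
        (∀ n ≤ N, ∀ x : Fin J → ℝ,
          |b n x x| ≤ (1 / 2) * ((S n).mulVec x ⬝ᵥ x)
            + c_b * ((M n).mulVec x ⬝ᵥ x)) →
        ∀ U : ℕ → Fin J → ℝ,
          (∀ n, 1 ≤ n → n < N → ∀ φ : Fin J → ℝ,
            (3 / 2) * ((M (n + 1)).mulVec (U (n + 1)) ⬝ᵥ φ)
                - 2 * ((M n).mulVec (U n) ⬝ᵥ φ)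
                + (1 / 2) * ((M (n - 1)).mulVec (U (n - 1)) ⬝ᵥ φ)
                + τ * ((S (n + 1)).mulVec (U (n + 1)) ⬝ᵥ φ
                    + b (n + 1) (U (n + 1)) φ) = 0) →
          (M 1).mulVec (U 1) ⬝ᵥ U 1 ≤ c₀ * ((M 0).mulVec (U 0) ⬝ᵥ U 0) →
          ∀ n, 2 ≤ n → n ≤ N →
            (M n).mulVec (U n) ⬝ᵥ U n
                + τ * ∑ i ∈ Finset.Icc 2 n, (S i).mulVec (U i) ⬝ᵥ U i
              ≤ C * ((M 0).mulVec (U 0) ⬝ᵥ U 0) := by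
  set K := 29 * μ + 4 * c_b
  refine ⟨1 / (2 * (K + 1)), by positivity, Real.exp (4 * K * T) * (9 * c₀ + 3), by positivity, ?_⟩
  intro J N hN τ hτ hτ₀ hNτ M S b hM hS hlip hb U hU hU₁ n hn hnN
  have hKτ : 29 * (μ * τ) + 4 * (c_b * τ) ≤ 1 / 2 := by
    rw [le_div_iff₀ (by positivity)] at hτ₀
    nlinarith
  have hnear k (hk : k < N) : IsNear (μ * τ) (M k).toBilin' (M (k + 1)).toBilin' :=
    .of_matrix (by positivity) (hM k hk.le).posSemidef (hlip k hk)
  have hE₁ : energy (M 1).toBilin' (U 1) (U 0) ≤ (9 * c₀ + 3) / 4 * (M 0 *ᵥ U 0 ⬝ᵥ U 0) := by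
    simpa only [toBilin'_apply_eq_mulVec_dotProduct] using
      energy_le_of_isNear (hnear 0 (by omega)) (by nlinarith)
        ((hM 0 (by omega)).posSemidef.toBilin'_apply_self_nonneg (U 0))
        (hM 1 (by omega)).posSemidef.toBilin'_apply_self_nonneg
        (by simpa only [toBilin'_apply_eq_mulVec_dotProduct] using hU₁)
  have hexp : (1 + 4 * (29 * (μ * τ) + 4 * (c_b * τ))) ^ (n - 1) ≤ Real.exp (4 * K * T) := by
    refine (Real.one_add_pow_le_exp_mul (by nlinarith) _).trans (Real.exp_le_exp.mpr ?_)
    have : ((n - 1 : ℕ) : ℝ) * τ ≤ T := hNτ ▸ by gcongr; omega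
    nlinarith
  calc M n *ᵥ U n ⬝ᵥ U n + τ * ∑ i ∈ Finset.Icc 2 n, S i *ᵥ U i ⬝ᵥ U i
      ≤ 4 * ((1 + 4 * (29 * (μ * τ) + 4 * (c_b * τ))) ^ (n - 1)
        * energy (M 1).toBilin' (U 1) (U 0)) :=
      mass_add_sum_stiffness_le hμ hcb hτ hKτ (fun k hk => (hM k hk).posSemidef) hS hnear hb hU
        (by omega) hnN
    _ ≤ 4 * (Real.exp (4 * K * T) * ((9 * c₀ + 3) / 4 * (M 0 *ᵥ U 0 ⬝ᵥ U 0))) := by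
      gcongr
      exact energy_nonneg (hM 1 (by omega)).posSemidef.toBilin'_apply_self_nonneg _ _
    _ = Real.exp (4 * K * T) * (9 * c₀ + 3) * (M 0 *ᵥ U 0 ⬝ᵥ U 0) := by ring

/-- L² stability bound for the fully discrete BDF2 ALE-ESFEM scheme in
matrix–vector form: there exist `τ₀ > 0` and `C ≥ 0` depending only on `μ`,
`c_b`, `c₀` and `T = Nτ` such that, whenever `τ ≤ τ₀`, any solution `U` of the
BDF2 scheme with mass matrices `M^n` (symmetric positive definite, Lipschitz in
time), stiffness matrices `S^n` (symmetric positive semidefinite) and bounded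
nonsymmetric bilinear forms `b^n` satisfying the starting bound
`M¹U¹·U¹ ≤ c₀ M⁰U⁰·U⁰` obeys
`MⁿUⁿ·Uⁿ + τ ∑_{i=2}^n SⁱUⁱ·Uⁱ ≤ C M⁰U⁰·U⁰` for all `2 ≤ n ≤ N`. -/
theorem bdf2_fully_discrete_L2_stability
    (μ c_b c₀ T : ℝ) (hμ : 0 ≤ μ) (hcb : 0 ≤ c_b) (hc₀ : 0 ≤ c₀) (hT : 0 < T) :
    ∃ τ₀ : ℝ, 0 < τ₀ ∧ ∃ C : ℝ, 0 ≤ C ∧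
      ∀ (J N : ℕ), 2 ≤ N → ∀ τ : ℝ, 0 < τ → τ ≤ τ₀ → (N : ℝ) * τ = T →
      ∀ (M S : ℕ → Matrix (Fin J) (Fin J) ℝ)
        (b : ℕ → (Fin J → ℝ) →ₗ[ℝ] (Fin J → ℝ) →ₗ[ℝ] ℝ),
        (∀ n ≤ N, (M n).PosDef) →
        (∀ n ≤ N, (S n).PosSemidef) →
        (∀ n < N, ∀ x y : Fin J → ℝ,
          |(M (n + 1) - M n).mulVec x ⬝ᵥ y|
            ≤ μ * τ * Real.sqrt ((M n).mulVec x ⬝ᵥ x)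
                * Real.sqrt ((M n).mulVec y ⬝ᵥ y)) →
        (∀ n ≤ N, ∀ x : Fin J → ℝ,
          |b n x x| ≤ (1 / 2) * ((S n).mulVec x ⬝ᵥ x)
            + c_b * ((M n).mulVec x ⬝ᵥ x)) →
        ∀ U : ℕ → Fin J → ℝ,
          (∀ n, 1 ≤ n → n < N → ∀ φ : Fin J → ℝ,
            (3 / 2) * ((M (n + 1)).mulVec (U (n + 1)) ⬝ᵥ φ)
                - 2 * ((M n).mulVec (U n) ⬝ᵥ φ)
                + (1 / 2) * ((M (n - 1)).mulVec (U (n - 1)) ⬝ᵥ φ)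
                + τ * ((S (n + 1)).mulVec (U (n + 1)) ⬝ᵥ φ
                    + b (n + 1) (U (n + 1)) φ) = 0) →
          (M 1).mulVec (U 1) ⬝ᵥ U 1 ≤ c₀ * ((M 0).mulVec (U 0) ⬝ᵥ U 0) →
          ∀ n, 2 ≤ n → n ≤ N →
            (M n).mulVec (U n) ⬝ᵥ U n
                + τ * ∑ i ∈ Finset.Icc 2 n, (S i).mulVec (U i) ⬝ᵥ U i
              ≤ C * ((M 0).mulVec (U 0) ⬝ᵥ U 0) :=
  bdf2_fully_discrete_L2_stability_general μ c_b c₀ T hμ hcb hc₀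
end

section
/- Let J, N ∈ ℕ with N ≥ 2, τ > 0, and for n = 0, …, N let M^n be real symmetric positive definite J×J matrices, S^n real symmetric positive semidefinite J×J matrices, and b^n : ℝ^J × ℝ^J → ℝ bilinear forms. Assume: (i) there is μ ≥ 0 such that for all n < N and all x, y ∈ ℝ^J, |(M^{n+1} − M^n) x·y| ≤ μ τ (M^n x·x)^{1/2} (M^n y·y)^{1/2}; (ii) there is c_b ≥ 0 such that for all n and all x, |b^n(x,x)| ≤ (1/4)(S^n x·x) + c_b (M^n x·x). Let θ^0, …, θ^N ∈ ℝ^J and δ_2, …, δ_N ≥ 0 and c_R ≥ 0 be such that for n = 1, …, N−1 and all φ ∈ ℝ^J, (1/τ) ( (3/2)(M^{n+1} θ^{n+1})·φ − 2(M^n θ^n)·φ + (1/2)(M^{n−1} θ^{n−1})·φ ) + (S^{n+1} θ^{n+1})·φ + b^{n+1}(θ^{n+1}, φ) = R^{n+1}(φ), where R^{n+1} : ℝ^J → ℝ is linear and satisfies |R^{n+1}(θ^{n+1})| ≤ (1/4)(S^{n+1} θ^{n+1}·θ^{n+1}) + c_R (M^{n+1} θ^{n+1}·θ^{n+1}) +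 δ_{n+1}. Then there exist τ₀ > 0 and C ≥ 0, depending only on μ, c_b, c_R and the product Nτ, such that whenever τ ≤ τ₀, for every n with 2 ≤ n ≤ N: M^n θ^n·θ^n + τ Σ_{i=2}^{n} S^i θ^i·θ^i ≤ C ( M^0 θ^0·θ^0 + M^1 θ^1·θ^1 + τ Σ_{i=2}^{n} δ_i ). -/
/-!
Write `E^n = ¼ (|θⁿ|² + |2θⁿ - θⁿ⁻¹|²)` in the `Mⁿ`-norm (the `G`-norm of BDF2). Testing the
scheme with `θⁿ⁺¹` and freezing the mass matrix at `Mⁿ⁺¹`, the `G`-stability identity of BDF2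
turns the time-difference term into `E^{n+1} - (Mⁿ⁺¹-version of Eⁿ)` plus a nonnegative jump
term. By (i), changing the mass matrix from one step to the next costs `O(μτ)` times
`Eⁿ + |θⁿ⁺¹|²`, and (ii) together with the residual bound costs `½ τ |θⁿ⁺¹|²_S` plus
`O(τ) |θⁿ⁺¹|²_M`. Since `|θⁿ⁺¹|²_M ≤ 4 E^{n+1}`, the latter is absorbed into the left-hand side
once `τ` is small, giving `E^{n+1} + ½ τ |θⁿ⁺¹|²_S ≤ e^{Λτ} Eⁿ + 2τ δ_{n+1}`; a discrete Grönwall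
argument over `Nτ = T` concludes.
-/

open Matrix Real Finset

variable {ι : Type*} [Fintype ι]

namespace Matrix

variable {A : Matrix ι ι ℝ}

lemma IsHermitian.mulVec_dotProduct_comm (hA : A.IsHermitian) (x y : ι → ℝ) :
    A *ᵥ x ⬝ᵥ y = A *ᵥ y ⬝ᵥ x := by
  rw [dotProduct_comm, dotProduct_mulVec, ← mulVec_transpose,
    ← conjTranspose_eq_transpose_of_trivial, hA.eq]

lemma PosSemidef.mulVec_dotProduct_self_nonneg (hA : A.PosSemidef) (x : ι → ℝ) :
    0 ≤ A *ᵥ x ⬝ᵥ x := by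
  simpa [dotProduct_comm] using hA.dotProduct_mulVec_nonneg x

lemma PosSemidef.mulVec_sub_dotProduct_le (hA : A.PosSemidef) (x y : ι → ℝ) :
    A *ᵥ (x - y) ⬝ᵥ (x - y) ≤ 2 * (A *ᵥ x ⬝ᵥ x) + 2 * (A *ᵥ y ⬝ᵥ y) := by
  have hsum := hA.mulVec_dotProduct_self_nonneg (x + y)
  have hswap := hA.1.mulVec_dotProduct_comm x y
  simp only [mulVec_add, mulVec_sub, add_dotProduct, sub_dotProduct, dotProduct_add,
    dotProduct_sub] at hsum ⊢
  linarith

lemma mulVec_two_smul_dotProduct (x : ι → ℝ) :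
    A *ᵥ ((2 : ℝ) • x) ⬝ᵥ ((2 : ℝ) • x) = 4 * (A *ᵥ x ⬝ᵥ x) := by
  simp only [mulVec_smul, smul_dotProduct, dotProduct_smul, smul_eq_mul]
  ring

end Matrix

/-- The `G`-norm energy of BDF2 with current value `u` and previous value `v`. -/
noncomputable def bdf2Energy (A : Matrix ι ι ℝ) (u v : ι → ℝ) : ℝ :=
  (A *ᵥ u ⬝ᵥ u + A *ᵥ ((2 : ℝ) • u - v) ⬝ᵥ ((2 : ℝ) • u - v)) / 4

section bdf2Energy

variable {A : Matrix ι ι ℝ}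

lemma Matrix.IsHermitian.bdf2_identity (hA : A.IsHermitian) (a b c : ι → ℝ) :
    3 / 2 * (A *ᵥ a ⬝ᵥ a) - 2 * (A *ᵥ b ⬝ᵥ a) + 1 / 2 * (A *ᵥ c ⬝ᵥ a)
      = bdf2Energy A a b - bdf2Energy A b c
        + A *ᵥ (a - (2 : ℝ) • b + c) ⬝ᵥ (a - (2 : ℝ) • b + c) / 4 := by
  simp only [bdf2Energy, mulVec_add, mulVec_sub, mulVec_smul, add_dotProduct, sub_dotProduct,
    smul_dotProduct, dotProduct_add, dotProduct_sub, dotProduct_smul, smul_eq_mul]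
  rw [hA.mulVec_dotProduct_comm b a, hA.mulVec_dotProduct_comm c a,
    hA.mulVec_dotProduct_comm c b]
  ring

lemma Matrix.PosSemidef.bdf2Energy_nonneg (hA : A.PosSemidef) (u v : ι → ℝ) :
    0 ≤ bdf2Energy A u v := by
  unfold bdf2Energy
  have := hA.mulVec_dotProduct_self_nonneg u
  have := hA.mulVec_dotProduct_self_nonneg ((2 : ℝ) • u - v)
  positivity

lemma Matrix.PosSemidef.mulVec_dotProduct_fst_le_bdf2Energy (hA : A.PosSemidef)
    (u v : ι → ℝ) : A *ᵥ u ⬝ᵥ u ≤ 4 * bdf2Energy A u v := by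
  unfold bdf2Energy
  linarith [hA.mulVec_dotProduct_self_nonneg ((2 : ℝ) • u - v)]

lemma Matrix.PosSemidef.mulVec_dotProduct_snd_le_bdf2Energy (hA : A.PosSemidef)
    (u v : ι → ℝ) : A *ᵥ v ⬝ᵥ v ≤ 32 * bdf2Energy A u v := by
  have h := hA.mulVec_sub_dotProduct_le ((2 : ℝ) • u) ((2 : ℝ) • u - v)
  rw [sub_sub_cancel, mulVec_two_smul_dotProduct] at h
  unfold bdf2Energy
  linarith [hA.mulVec_dotProduct_self_nonneg u,
    hA.mulVec_dotProduct_self_nonneg ((2 : ℝ) • u - v)]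

lemma Matrix.PosSemidef.bdf2Energy_le (hA : A.PosSemidef) (u v : ι → ℝ) :
    bdf2Energy A u v ≤ 9 / 4 * (A *ᵥ u ⬝ᵥ u) + 1 / 2 * (A *ᵥ v ⬝ᵥ v) := by
  have h := hA.mulVec_sub_dotProduct_le ((2 : ℝ) • u) v
  rw [mulVec_two_smul_dotProduct] at h
  unfold bdf2Energy
  linarith

end bdf2Energy

/-- Assumption (i) on consecutive mass matrices `M, M'`, with `ε = μτ`. -/
def MassStepBound (M M' : Matrix ι ι ℝ) (ε : ℝ) : Prop :=
  ∀ x y : ι → ℝ, |(M' - M) *ᵥ x ⬝ᵥ y| ≤ ε * √(M *ᵥ x ⬝ᵥ x) * √(M *ᵥ y ⬝ᵥ y)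

namespace MassStepBound

variable {M M' : Matrix ι ι ℝ} {ε : ℝ}

lemma abs_dotProduct_le (h : MassStepBound M M' ε) (hM : M.PosSemidef) (hε : 0 ≤ ε)
    (x y : ι → ℝ) :
    |(M' - M) *ᵥ x ⬝ᵥ y| ≤ ε / 2 * (M *ᵥ x ⬝ᵥ x + M *ᵥ y ⬝ᵥ y) := by
  have hx := sq_sqrt (hM.mulVec_dotProduct_self_nonneg x)
  have hy := sq_sqrt (hM.mulVec_dotProduct_self_nonneg y)
  have amgm := two_mul_le_add_sq √(M *ᵥ x ⬝ᵥ x) √(M *ᵥ y ⬝ᵥ y)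
  calc |(M' - M) *ᵥ x ⬝ᵥ y| ≤ ε * (√(M *ᵥ x ⬝ᵥ x) * √(M *ᵥ y ⬝ᵥ y)) := by
        rw [← mul_assoc]; exact h x y
    _ ≤ ε * ((M *ᵥ x ⬝ᵥ x + M *ᵥ y ⬝ᵥ y) / 2) := by gcongr; linarith
    _ = ε / 2 * (M *ᵥ x ⬝ᵥ x + M *ᵥ y ⬝ᵥ y) := by ring

lemma abs_sub_le (h : MassStepBound M M' ε) (hM : M.PosSemidef) (x : ι → ℝ) :
    |M' *ᵥ x ⬝ᵥ x - M *ᵥ x ⬝ᵥ x| ≤ ε * (M *ᵥ x ⬝ᵥ x) := by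
  have hx := h x x
  rwa [sub_mulVec, sub_dotProduct, mul_assoc,
    mul_self_sqrt (hM.mulVec_dotProduct_self_nonneg x)] at hx

lemma le_one_add_mul (h : MassStepBound M M' ε) (hM : M.PosSemidef) (x : ι → ℝ) :
    M' *ᵥ x ⬝ᵥ x ≤ (1 + ε) * (M *ᵥ x ⬝ᵥ x) := by
  linarith [(abs_le.1 (h.abs_sub_le hM x)).2]

lemma le_two_mul (h : MassStepBound M M' ε) (hM : M.PosSemidef) (hε : ε ≤ 1 / 2)
    (x : ι → ℝ) : M *ᵥ x ⬝ᵥ x ≤ 2 * (M' *ᵥ x ⬝ᵥ x) := by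
  have := mul_le_mul_of_nonneg_right hε (hM.mulVec_dotProduct_self_nonneg x)
  linarith [(abs_le.1 (h.abs_sub_le hM x)).1]

lemma bdf2Energy_le (h : MassStepBound M M' ε) (hM : M.PosSemidef) (u v : ι → ℝ) :
    bdf2Energy M' u v ≤ (1 + ε) * bdf2Energy M u v := by
  unfold bdf2Energy
  linarith [h.le_one_add_mul hM u, h.le_one_add_mul hM ((2 : ℝ) • u - v)]

lemma bdf2Energy_le_three_mul (h : MassStepBound M M' ε) (hM : M.PosSemidef)
    (hM' : M'.PosSemidef) (hε : ε ≤ 1 / 2) (u v : ι → ℝ) :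
    bdf2Energy M' u v ≤ 3 * (M *ᵥ v ⬝ᵥ v + M' *ᵥ u ⬝ᵥ u) := by
  have hv := hM.mulVec_dotProduct_self_nonneg v
  have := mul_le_mul_of_nonneg_right hε hv
  linarith [hM'.bdf2Energy_le u v, h.le_one_add_mul hM v, hM'.mulVec_dotProduct_self_nonneg u]

end MassStepBound

theorem bdf2Energy_sub_le_of_massStepBound {M₀ M₁ M₂ : Matrix ι ι ℝ} {ε : ℝ} (h₀ : M₀.PosSemidef)
    (h₁ : M₁.PosSemidef) (h₂ : M₂.PosSemidef) (hε : 0 ≤ ε) (hε2 : ε ≤ 1 / 2)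
    (h₀₁ : MassStepBound M₀ M₁ ε) (h₁₂ : MassStepBound M₁ M₂ ε) (a b c : ι → ℝ) :
    bdf2Energy M₂ a b - (1 + 30 * ε) * bdf2Energy M₁ b c - 4 * ε * (M₂ *ᵥ a ⬝ᵥ a)
      ≤ 3 / 2 * (M₂ *ᵥ a ⬝ᵥ a) - 2 * (M₁ *ᵥ b ⬝ᵥ a) + 1 / 2 * (M₀ *ᵥ c ⬝ᵥ a) := by
  have hsplit : 3 / 2 * (M₂ *ᵥ a ⬝ᵥ a) - 2 * (M₁ *ᵥ b ⬝ᵥ a) + 1 / 2 * (M₀ *ᵥ c ⬝ᵥ a)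
      = (3 / 2 * (M₂ *ᵥ a ⬝ᵥ a) - 2 * (M₂ *ᵥ b ⬝ᵥ a) + 1 / 2 * (M₂ *ᵥ c ⬝ᵥ a))
        + (2 * ((M₂ - M₁) *ᵥ b ⬝ᵥ a) - ((M₂ - M₁) *ᵥ c ⬝ᵥ a) / 2
          - ((M₁ - M₀) *ᵥ c ⬝ᵥ a) / 2) := by
    simp only [sub_mulVec, sub_dotProduct]
    ring
  set E₁ := bdf2Energy M₁ b c
  set P := M₂ *ᵥ a ⬝ᵥ a
  have hmass : (M₁ *ᵥ b ⬝ᵥ b + M₁ *ᵥ a ⬝ᵥ a) + (M₁ *ᵥ c ⬝ᵥ c + M₁ *ᵥ a ⬝ᵥ a) / 4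
      + (M₀ *ᵥ c ⬝ᵥ c + M₀ *ᵥ a ⬝ᵥ a) / 4 ≤ 28 * E₁ + 7 / 2 * P := by
    linarith [h₁.mulVec_dotProduct_fst_le_bdf2Energy b c,
      h₁.mulVec_dotProduct_snd_le_bdf2Energy b c, h₁₂.le_two_mul h₁ hε2 a,
      h₀₁.le_two_mul h₀ hε2 a, h₀₁.le_two_mul h₀ hε2 c]
  have hpert : -(ε * (28 * E₁ + 7 / 2 * P)) ≤ 2 * ((M₂ - M₁) *ᵥ b ⬝ᵥ a)
      - ((M₂ - M₁) *ᵥ c ⬝ᵥ a) / 2 - ((M₁ - M₀) *ᵥ c ⬝ᵥ a) / 2 := by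
    have := mul_le_mul_of_nonneg_left hmass hε
    linarith [abs_le.1 (h₁₂.abs_dotProduct_le h₁ hε b a),
      abs_le.1 (h₁₂.abs_dotProduct_le h₁ hε c a), abs_le.1 (h₀₁.abs_dotProduct_le h₀ hε c a)]
  have hjump := h₂.mulVec_dotProduct_self_nonneg (a - (2 : ℝ) • b + c)
  have hεE₁ := mul_nonneg hε (h₁.bdf2Energy_nonneg b c)
  have hεP := mul_nonneg hε (h₂.mulVec_dotProduct_self_nonneg a)
  rw [hsplit, h₂.1.bdf2_identity]
  linarith [h₁₂.bdf2Energy_le h₁ b c]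

lemma add_le_exp_mul_add_of_one_sub_mul_add_le {x y g d α κ : ℝ} (hx : 0 ≤ x) (hy : 0 ≤ y)
    (hg : 0 ≤ g) (hd : 0 ≤ d) (hκ : 0 ≤ κ) (hκ2 : κ ≤ 1 / 2)
    (h : (1 - κ) * x + y ≤ (1 + α) * g + d) :
    x + y ≤ exp (α + 2 * κ) * g + 2 * d := by
  have hexp : (1 + 2 * κ) * (1 + α) ≤ exp (α + 2 * κ) := by
    rw [exp_add, mul_comm]
    exact mul_le_mul (by linarith [add_one_le_exp α]) (by linarith [add_one_le_exp (2 * κ)])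
      (by positivity) (exp_pos α).le
  calc x + y ≤ (1 + 2 * κ) * ((1 - κ) * x + y) := by nlinarith [mul_nonneg hκ hx]
    _ ≤ (1 + 2 * κ) * ((1 + α) * g + d) := by gcongr
    _ = (1 + 2 * κ) * (1 + α) * g + (1 + 2 * κ) * d := by ring
    _ ≤ exp (α + 2 * κ) * g + 2 * d := by gcongr; linarith

theorem bdf2_energy_step {M₀ M₁ M₂ S : Matrix ι ι ℝ} {μ c_b c_R τ δ B R : ℝ}
    (h₀ : M₀.PosSemidef) (h₁ : M₁.PosSemidef) (h₂ : M₂.PosSemidef) (hS : S.PosSemidef)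
    (hμ : 0 ≤ μ) (hcb : 0 ≤ c_b) (hcR : 0 ≤ c_R) (hτ : 0 < τ) (hδ : 0 ≤ δ)
    (hμτ : μ * τ ≤ 1 / 2) (hκτ : 4 * (c_b + c_R + 4 * μ) * τ ≤ 1 / 2)
    (h₀₁ : MassStepBound M₀ M₁ (μ * τ)) (h₁₂ : MassStepBound M₁ M₂ (μ * τ)) (a b c : ι → ℝ)
    (hB : |B| ≤ 1 / 4 * (S *ᵥ a ⬝ᵥ a) + c_b * (M₂ *ᵥ a ⬝ᵥ a))
    (hR : |R| ≤ 1 / 4 * (S *ᵥ a ⬝ᵥ a) + c_R * (M₂ *ᵥ a ⬝ᵥ a) + δ)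
    (hscheme : 1 / τ * (3 / 2 * (M₂ *ᵥ a ⬝ᵥ a) - 2 * (M₁ *ᵥ b ⬝ᵥ a) + 1 / 2 * (M₀ *ᵥ c ⬝ᵥ a))
      + S *ᵥ a ⬝ᵥ a + B = R) :
    bdf2Energy M₂ a b + τ / 2 * (S *ᵥ a ⬝ᵥ a)
      ≤ exp ((30 * μ + 8 * (c_b + c_R + 4 * μ)) * τ) * bdf2Energy M₁ b c + 2 * (τ * δ) := by
  set E₂ := bdf2Energy M₂ a b
  set P := M₂ *ᵥ a ⬝ᵥ a
  have hform := bdf2Energy_sub_le_of_massStepBound h₀ h₁ h₂ (by positivity) hμτ h₀₁ h₁₂ a b c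
  have hscheme' : 3 / 2 * P - 2 * (M₁ *ᵥ b ⬝ᵥ a) + 1 / 2 * (M₀ *ᵥ c ⬝ᵥ a)
      = τ * (R - B - S *ᵥ a ⬝ᵥ a) := by
    rw [← hscheme]; field_simp; ring
  have hforcing : τ * (R - B - S *ᵥ a ⬝ᵥ a)
      ≤ τ * (-(S *ᵥ a ⬝ᵥ a) / 2 + (c_b + c_R) * P + δ) := by
    gcongr
    linarith [le_abs_self R, neg_abs_le B]
  have hP : (c_b + c_R + 4 * μ) * τ * P ≤ 4 * (c_b + c_R + 4 * μ) * τ * E₂ := by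
    have := mul_le_mul_of_nonneg_left (h₂.mulVec_dotProduct_fst_le_bdf2Energy a b)
      (by positivity : 0 ≤ (c_b + c_R + 4 * μ) * τ)
    linarith
  have hS₀ := hS.mulVec_dotProduct_self_nonneg a
  have habsorb := add_le_exp_mul_add_of_one_sub_mul_add_le (y := τ / 2 * (S *ᵥ a ⬝ᵥ a))
    (α := 30 * μ * τ) (d := τ * δ) (h₂.bdf2Energy_nonneg a b) (by positivity)
    (h₁.bdf2Energy_nonneg b c) (by positivity) (by positivity) hκτ (by linarith)
  convert habsorb using 4
  ring

lemma exp_mul_pow_le {a τ : ℝ} {k N : ℕ} (ha : 0 ≤ a) (hτ : 0 ≤ τ) (hk : k ≤ N) :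
    exp (a * τ) ^ k ≤ exp (a * (N * τ)) := by
  rw [← exp_nat_mul, exp_le_exp]
  have : (k : ℝ) ≤ N := by exact_mod_cast hk
  nlinarith [mul_nonneg ha hτ]

lemma add_sum_le_pow_mul_of_step {g s d : ℕ → ℝ} {q : ℝ} {m N : ℕ} (hq : 1 ≤ q)
    (hs : ∀ i, m < i → i ≤ N → 0 ≤ s i) (hd : ∀ i, m < i → i ≤ N → 0 ≤ d i)
    (hstep : ∀ n, m ≤ n → n < N → g (n + 1) + s (n + 1) ≤ q * g n + d (n + 1)) :
    ∀ n, m ≤ n → n ≤ N →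
      g n + ∑ i ∈ Icc (m + 1) n, s i ≤ q ^ (n - m) * (g m + ∑ i ∈ Icc (m + 1) n, d i) := by
  intro n hmn
  induction n, hmn using Nat.le_induction with
  | base => intro _; simp
  | succ n hmn ih =>
    intro hnN
    have hsum_s : 0 ≤ ∑ i ∈ Icc (m + 1) n, s i :=
      sum_nonneg fun i hi => hs i (by simp at hi; omega) (by simp at hi; omega)
    rw [sum_Icc_succ_top (by omega), sum_Icc_succ_top (by omega), Nat.sub_add_comm hmn, pow_succ]
    calc g (n + 1) + (∑ i ∈ Icc (m + 1) n, s i + s (n + 1))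
        ≤ q * (g n + ∑ i ∈ Icc (m + 1) n, s i) + d (n + 1) := by
          nlinarith [hstep n hmn (by omega)]
      _ ≤ q * (q ^ (n - m) * (g m + ∑ i ∈ Icc (m + 1) n, d i)) + q ^ (n - m) * q * d (n + 1) := by
          gcongr
          · exact ih (by omega)
          · exact le_mul_of_one_le_left (hd (n + 1) (by omega) hnN)
              (one_le_mul_of_one_le_of_one_le (one_le_pow₀ hq) hq)
      _ = q ^ (n - m) * q * (g m + (∑ i ∈ Icc (m + 1) n, d i + d (n + 1))) := by ring

theorem bdf2_stability_of_energy_step {M S : ℕ → Matrix ι ι ℝ} {θ : ℕ → ι → ℝ} {δ : ℕ → ℝ}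
    {Λ τ : ℝ} {N : ℕ} (hM : ∀ n ≤ N, (M n).PosSemidef) (hS : ∀ n ≤ N, (S n).PosSemidef)
    (hδ : ∀ i, 2 ≤ i → i ≤ N → 0 ≤ δ i) (hΛ : 0 ≤ Λ) (hτ : 0 ≤ τ)
    (hstep : ∀ k, 1 ≤ k → k < N →
      bdf2Energy (M (k + 1)) (θ (k + 1)) (θ k) + τ / 2 * (S (k + 1) *ᵥ θ (k + 1) ⬝ᵥ θ (k + 1))
        ≤ exp (Λ * τ) * bdf2Energy (M k) (θ k) (θ (k - 1)) + 2 * (τ * δ (k + 1)))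
    (n : ℕ) (hn : 2 ≤ n) (hnN : n ≤ N) :
    M n *ᵥ θ n ⬝ᵥ θ n + τ * ∑ i ∈ Icc 2 n, S i *ᵥ θ i ⬝ᵥ θ i
      ≤ 4 * exp (Λ * (N * τ)) * (bdf2Energy (M 1) (θ 1) (θ 0) + 2 * (τ * ∑ i ∈ Icc 2 n, δ i)) := by
  have hgron := add_sum_le_pow_mul_of_step (g := fun k => bdf2Energy (M k) (θ k) (θ (k - 1)))
    (s := fun i => τ / 2 * (S i *ᵥ θ i ⬝ᵥ θ i)) (d := fun i => 2 * (τ * δ i))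
    (one_le_exp (by positivity))
    (fun i _ hiN => mul_nonneg (by positivity) ((hS i hiN).mulVec_dotProduct_self_nonneg (θ i)))
    (fun i hi hiN => by have := hδ i hi hiN; positivity) hstep n (by omega) hnN
  simp only [← mul_sum] at hgron
  have hpow := exp_mul_pow_le hΛ hτ (show n - 1 ≤ N by omega)
  have hE₁ := (hM 1 (by omega)).bdf2Energy_nonneg (θ 1) (θ 0)
  have hδsum : 0 ≤ τ * ∑ i ∈ Icc 2 n, δ i :=
    mul_nonneg hτ (sum_nonneg fun i hi => hδ i (mem_Icc.1 hi).1 ((mem_Icc.1 hi).2.trans hnN))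
  have hSsum : 0 ≤ τ * ∑ i ∈ Icc 2 n, S i *ᵥ θ i ⬝ᵥ θ i :=
    mul_nonneg hτ (sum_nonneg fun i hi =>
      (hS i ((mem_Icc.1 hi).2.trans hnN)).mulVec_dotProduct_self_nonneg (θ i))
  have hEn := (hM n hnN).mulVec_dotProduct_fst_le_bdf2Energy (θ n) (θ (n - 1))
  have := mul_le_mul_of_nonneg_right hpow (by positivity : 0 ≤ bdf2Energy (M 1) (θ 1) (θ 0)
    + 2 * (τ * ∑ i ∈ Icc 2 n, δ i))
  linarith

theorem bdf2_perturbed_stability_general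
    (μ c_b c_R T : ℝ) (hμ : 0 ≤ μ) (hcb : 0 ≤ c_b) (hcR : 0 ≤ c_R) :
    ∃ τ₀ : ℝ, 0 < τ₀ ∧ ∃ C : ℝ, 0 ≤ C ∧
      ∀ (J N : ℕ), 2 ≤ N → ∀ τ : ℝ, 0 < τ → τ ≤ τ₀ → (N : ℝ) * τ = T →
      ∀ (M S : ℕ → Matrix (Fin J) (Fin J) ℝ)
        (b : ℕ → (Fin J → ℝ) →ₗ[ℝ] (Fin J → ℝ) →ₗ[ℝ] ℝ),
        (∀ n ≤ N, (M n).PosDef) →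
        (∀ n ≤ N, (S n).PosSemidef) →
        -- (i) Lipschitz-in-time mass matrices
        (∀ n < N, ∀ x y : Fin J → ℝ,
          |(M (n + 1) - M n).mulVec x ⬝ᵥ y|
            ≤ μ * τ * Real.sqrt ((M n).mulVec x ⬝ᵥ x)
                * Real.sqrt ((M n).mulVec y ⬝ᵥ y)) →
        -- (ii) bound on the advection forms
        (∀ n ≤ N, ∀ x : Fin J → ℝ,
          |b n x x| ≤ (1 / 4) * ((S n).mulVec x ⬝ᵥ x)
            + c_b * ((M n).mulVec x ⬝ᵥ x)) →
        ∀ (θ : ℕ → Fin J → ℝ) (δ : ℕ → ℝ)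
          (R : ℕ → (Fin J → ℝ) →ₗ[ℝ] ℝ),
          (∀ i, 2 ≤ i → i ≤ N → 0 ≤ δ i) →
          (∀ n, 1 ≤ n → n < N → ∀ φ : Fin J → ℝ,
            (1 / τ) * ((3 / 2) * ((M (n + 1)).mulVec (θ (n + 1)) ⬝ᵥ φ)
                  - 2 * ((M n).mulVec (θ n) ⬝ᵥ φ)
                  + (1 / 2) * ((M (n - 1)).mulVec (θ (n - 1)) ⬝ᵥ φ))
                + (S (n + 1)).mulVec (θ (n + 1)) ⬝ᵥ φ
                + b (n + 1) (θ (n + 1)) φ = R (n + 1) φ) →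
          (∀ n, 1 ≤ n → n < N →
            |R (n + 1) (θ (n + 1))|
              ≤ (1 / 4) * ((S (n + 1)).mulVec (θ (n + 1)) ⬝ᵥ θ (n + 1))
                + c_R * ((M (n + 1)).mulVec (θ (n + 1)) ⬝ᵥ θ (n + 1))
                + δ (n + 1)) →
          ∀ n, 2 ≤ n → n ≤ N →
            (M n).mulVec (θ n) ⬝ᵥ θ n
                + τ * ∑ i ∈ Finset.Icc 2 n, (S i).mulVec (θ i) ⬝ᵥ θ i
              ≤ C * ((M 0).mulVec (θ 0) ⬝ᵥ θ 0 + (M 1).mulVec (θ 1) ⬝ᵥ θ 1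
                  + τ * ∑ i ∈ Finset.Icc 2 n, δ i) := by
  set κ := 4 * (c_b + c_R + 4 * μ)
  set Λ := 30 * μ + 8 * (c_b + c_R + 4 * μ)
  have hκ : 0 ≤ κ := by positivity
  refine ⟨1 / (2 * κ + 1), by positivity, 12 * exp (Λ * T), by positivity, ?_⟩
  intro J N hN τ hτ hτ₀ hT M S b hM hS hlip hb θ δ R hδ hscheme hR
  have hκτ : κ * τ ≤ 1 / 2 := by
    rw [le_div_iff₀ (by positivity)] at hτ₀
    nlinarith
  have hμτ : μ * τ ≤ 1 / 2 := by nlinarith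
  have hM' n (hn : n ≤ N) : (M n).PosSemidef := (hM n hn).posSemidef
  have hstep : ∀ k, 1 ≤ k → k < N →
      bdf2Energy (M (k + 1)) (θ (k + 1)) (θ k) + τ / 2 * (S (k + 1) *ᵥ θ (k + 1) ⬝ᵥ θ (k + 1))
        ≤ exp (Λ * τ) * bdf2Energy (M k) (θ k) (θ (k - 1)) + 2 * (τ * δ (k + 1)) := by
    rintro (_ | j) hj hjN
    · omega
    have hsch := hscheme (j + 1) hj hjN (θ (j + 2))
    simp only [Nat.add_sub_cancel] at hsch
    exact bdf2_energy_step (hM' j (by omega)) (hM' (j + 1) hjN.le) (hM' (j + 2) hjN)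
      (hS (j + 2) hjN) hμ hcb hcR hτ (hδ (j + 2) (by omega) hjN) hμτ hκτ
      (hlip j (by omega)) (hlip (j + 1) hjN) _ _ _ (hb (j + 2) hjN _) (hR (j + 1) hj hjN) hsch
  intro n hn hnN
  have hE₁ := MassStepBound.bdf2Energy_le_three_mul (M := M 0) (M' := M 1) (hlip 0 (by omega))
    (hM' 0 (by omega)) (hM' 1 (by omega)) hμτ (θ 1) (θ 0)
  have hbound := bdf2_stability_of_energy_step hM' hS hδ (by positivity) hτ.le hstep n hn hnN
  have hexp := (exp_pos (Λ * T)).le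
  have hδsum : 0 ≤ τ * ∑ i ∈ Icc 2 n, δ i :=
    mul_nonneg hτ.le (sum_nonneg fun i hi => hδ i (mem_Icc.1 hi).1 ((mem_Icc.1 hi).2.trans hnN))
  rw [hT] at hbound
  linarith [mul_le_mul_of_nonneg_left hE₁ hexp, mul_nonneg hexp hδsum]

/-- Perturbed BDF2 stability estimate (matrix–vector form) used in the final
step of the error analysis of the fully discrete BDF2 ALE-ESFEM method: there
exist `τ₀ > 0` and `C ≥ 0` depending only on `μ, c_b, c_R` and `T = Nτ` such
that, whenever `τ ≤ τ₀`, any sequence `θ` solving the perturbed BDF2 scheme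
with linear residuals `R^{n+1}` bounded by
`|R^{n+1}(θ^{n+1})| ≤ (1/4) S^{n+1}θ^{n+1}·θ^{n+1} + c_R M^{n+1}θ^{n+1}·θ^{n+1} + δ_{n+1}`
satisfies `Mⁿθⁿ·θⁿ + τ ∑_{i=2}^n Sⁱθⁱ·θⁱ
  ≤ C (M⁰θ⁰·θ⁰ + M¹θ¹·θ¹ + τ ∑_{i=2}^n δᵢ)` for all `2 ≤ n ≤ N`. -/
theorem bdf2_perturbed_stability
    (μ c_b c_R T : ℝ) (hμ : 0 ≤ μ) (hcb : 0 ≤ c_b) (hcR : 0 ≤ c_R) (hT : 0 < T) :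
    ∃ τ₀ : ℝ, 0 < τ₀ ∧ ∃ C : ℝ, 0 ≤ C ∧
      ∀ (J N : ℕ), 2 ≤ N → ∀ τ : ℝ, 0 < τ → τ ≤ τ₀ → (N : ℝ) * τ = T →
      ∀ (M S : ℕ → Matrix (Fin J) (Fin J) ℝ)
        (b : ℕ → (Fin J → ℝ) →ₗ[ℝ] (Fin J → ℝ) →ₗ[ℝ] ℝ),
        (∀ n ≤ N, (M n).PosDef) →
        (∀ n ≤ N, (S n).PosSemidef) →
        -- (i) Lipschitz-in-time mass matrices
        (∀ n < N, ∀ x y : Fin J → ℝ,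
          |(M (n + 1) - M n).mulVec x ⬝ᵥ y|
            ≤ μ * τ * Real.sqrt ((M n).mulVec x ⬝ᵥ x)
                * Real.sqrt ((M n).mulVec y ⬝ᵥ y)) →
        -- (ii) bound on the advection forms
        (∀ n ≤ N, ∀ x : Fin J → ℝ,
          |b n x x| ≤ (1 / 4) * ((S n).mulVec x ⬝ᵥ x)
            + c_b * ((M n).mulVec x ⬝ᵥ x)) →
        ∀ (θ : ℕ → Fin J → ℝ) (δ : ℕ → ℝ)
          (R : ℕ → (Fin J → ℝ) →ₗ[ℝ] ℝ),
          (∀ i, 2 ≤ i → i ≤ N → 0 ≤ δ i) →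
          (∀ n, 1 ≤ n → n < N → ∀ φ : Fin J → ℝ,
            (1 / τ) * ((3 / 2) * ((M (n + 1)).mulVec (θ (n + 1)) ⬝ᵥ φ)
                  - 2 * ((M n).mulVec (θ n) ⬝ᵥ φ)
                  + (1 / 2) * ((M (n - 1)).mulVec (θ (n - 1)) ⬝ᵥ φ))
                + (S (n + 1)).mulVec (θ (n + 1)) ⬝ᵥ φ
                + b (n + 1) (θ (n + 1)) φ = R (n + 1) φ) →
          (∀ n, 1 ≤ n → n < N →
            |R (n + 1) (θ (n + 1))|
              ≤ (1 / 4) * ((S (n + 1)).mulVec (θ (n + 1)) ⬝ᵥ θ (n + 1))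
                + c_R * ((M (n + 1)).mulVec (θ (n + 1)) ⬝ᵥ θ (n + 1))
                + δ (n + 1)) →
          ∀ n, 2 ≤ n → n ≤ N →
            (M n).mulVec (θ n) ⬝ᵥ θ n
                + τ * ∑ i ∈ Finset.Icc 2 n, (S i).mulVec (θ i) ⬝ᵥ θ i
              ≤ C * ((M 0).mulVec (θ 0) ⬝ᵥ θ 0 + (M 1).mulVec (θ 1) ⬝ᵥ θ 1
                  + τ * ∑ i ∈ Finset.Icc 2 n, δ i) :=
  bdf2_perturbed_stability_general μ c_b c_R T hμ hcb hcR
end
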